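/- arXiv:1503.07591 — 5 statements merged into one kernel-verified Lean document; each statement's English description precedes it below -/
import Mathlib

section
/- Under the assumptions of the identifiability setup (two representations $a\cos\phi=(a+\alpha)\cos(\phi+\beta)$ with positive amplitudes and positive instantaneous frequencies), the integers $k_n$ defined by $\beta(t_n)=k_n\pi$ at the points $t_n=\phi^{-1}((n+1/2)\pi)$ are all equal to a common even integer. -/
/-!
Write `ψ = φ + β`. Since both amplitudes are positive, `cos ∘ φ` and `cos ∘ ψ` have the same
zeros and the same sign. Both phases are strictly increasing, so between two consecutive zeros
`t_n < t_{n+1}` of `cos ∘ φ` (where `φ` advances by `π`) the phase `ψ` cannot pass a zero of `cos`,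
hence it also advances by exactly `π`. Thus `β(t_n) = ψ(t_n) - φ(t_n)` is independent of `n`, and
being a difference of two zeros of `cos` it is a multiple `kπ`. Finally `cos ψ > 0` where `φ = 0`,
which lies strictly between `ψ(t_{-1}) = kπ - π/2` and `ψ(t_0) = kπ + π/2`; this forces `k` even.
-/

open Real Function

lemma Real.eq_add_pi_of_cos_eq_zero {x y : ℝ} (hx : cos x = 0) (hy : cos y = 0) (hxy : x < y)
    (hyx : y ≤ x + π) : y = x + π := by
  obtain ⟨m, rfl⟩ := cos_eq_zero_iff.mp hx
  obtain ⟨n, rfl⟩ := cos_eq_zero_iff.mp hy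
  have hlt : (m : ℝ) < n := by nlinarith [pi_pos]
  have hle : (n : ℝ) ≤ m + 1 := by nlinarith [pi_pos]
  have hnm : n = m + 1 := by
    have := Int.cast_lt.mp hlt
    have : n ≤ m + 1 := by exact_mod_cast hle
    omega
  subst hnm
  push_cast
  ring

lemma Real.even_of_cos_pos {x : ℝ} {m : ℤ} (hx : 0 < cos x) (hxm : |x - m * π| < π / 2) :
    Even m := by
  have hcos : 0 < cos (x - m * π) := cos_pos_of_mem_Ioo (abs_lt.mp hxm)
  rcases Int.even_or_odd m with hm | hm
  · exact hm
  · rw [cos_sub_int_mul_pi, hm.neg_one_zpow] at hcos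
    linarith

section PhaseShift

variable {f g : ℝ → ℝ}

lemma add_pi_of_cos_eq_zero (hf : StrictMono f) (hg : StrictMono g) (hgc : Continuous g)
    (hzero : ∀ t, cos (f t) = 0 ↔ cos (g t) = 0) {t s : ℝ} (ht : cos (f t) = 0)
    (hs : f s = f t + π) : g s = g t + π := by
  have hs0 : cos (f s) = 0 := by rw [hs, cos_add_pi, ht, neg_zero]
  have hts : t < s := hf.lt_iff_lt.mp (by rw [hs]; linarith [pi_pos])
  refine eq_add_pi_of_cos_eq_zero ((hzero t).mp ht) ((hzero s).mp hs0) (hg hts) ?_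
  by_contra! hgap
  obtain ⟨u, hu, hgu⟩ := intermediate_value_Ioo hts.le hgc.continuousOn
    (show g t + π ∈ Set.Ioo (g t) (g s) from ⟨by linarith [pi_pos], hgap⟩)
  have hu0 : cos (f u) = 0 := (hzero u).mpr (by rw [hgu, cos_add_pi, (hzero t).mp ht, neg_zero])
  have hfu : f u < f t + π := hs ▸ hf hu.2
  exact hfu.ne (eq_add_pi_of_cos_eq_zero ht hu0 (hf hu.1) hfu.le)

lemma eq_add_int_mul_pi_of_cos_eq_zero (hf : Injective f) (hfs : Surjective f)
    (hstep : ∀ t s, cos (f t) = 0 → f s = f t + π → g s = g t + π) {t₀ : ℝ}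
    (ht₀ : cos (f t₀) = 0) (n : ℤ) : ∀ t, f t = f t₀ + n * π → g t = g t₀ + n * π := by
  have hzero : ∀ m : ℤ, cos (f t₀ + m * π) = 0 := fun m => by
    rw [cos_add_int_mul_pi, ht₀, mul_zero]
  induction n using Int.induction_on with
  | zero =>
    intro t ht
    obtain rfl : t = t₀ := hf (by simpa using ht)
    simp
  | succ i ih =>
    intro t ht
    obtain ⟨s, hs⟩ := hfs (f t₀ + i * π)
    rw [hstep s t (hs ▸ hzero i) (by rw [ht, hs]; push_cast; ring), ih s hs]
    push_cast
    ring
  | pred i ih =>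
    intro t ht
    obtain ⟨s, hs⟩ := hfs (f t₀ + (-i : ℤ) * π)
    have ht0 : cos (f t) = 0 := ht ▸ hzero (-i - 1)
    have := hstep t s ht0 (by rw [ht, hs]; push_cast; ring)
    rw [ih s hs] at this
    push_cast at this ⊢
    linarith

theorem exists_even_phase_shift (hf : StrictMono f) (hfs : Surjective f) (hg : StrictMono g)
    (hgc : Continuous g) (hzero : ∀ t, cos (f t) = 0 ↔ cos (g t) = 0)
    (hpos : ∀ t, 0 < cos (f t) → 0 < cos (g t)) :
    ∃ k : ℤ, Even k ∧ ∀ (n : ℤ) (t : ℝ), f t = (n + 1 / 2) * π → g t = f t + k * π := by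
  have hstep := @add_pi_of_cos_eq_zero f g hf hg hgc hzero
  obtain ⟨t₀, ht₀⟩ := hfs (π / 2)
  have hft₀ : cos (f t₀) = 0 := by rw [ht₀, cos_pi_div_two]
  obtain ⟨k, hk⟩ := cos_eq_zero_iff.mp ((hzero t₀).mp hft₀)
  have hgt₀ : g t₀ = f t₀ + k * π := by rw [hk, ht₀]; ring
  refine ⟨k, ?_, fun n t ht => ?_⟩
  · obtain ⟨t₁, ht₁⟩ := hfs 0
    obtain ⟨t₂, ht₂⟩ := hfs (-(π / 2))
    have hgt₂ : g t₀ = g t₂ + π :=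
      hstep (by rw [ht₂, cos_neg, cos_pi_div_two]) (by rw [ht₀, ht₂]; ring)
    have h₂₁ : g t₂ < g t₁ := hg (hf.lt_iff_lt.mp (by rw [ht₁, ht₂]; linarith [pi_pos]))
    have h₁₀ : g t₁ < g t₀ := hg (hf.lt_iff_lt.mp (by rw [ht₁, ht₀]; linarith [pi_pos]))
    refine even_of_cos_pos (hpos t₁ (by rw [ht₁, cos_zero]; exact one_pos)) (abs_lt.mpr ⟨?_, ?_⟩)
    all_goals linarith
  · have := eq_add_int_mul_pi_of_cos_eq_zero hf.injective hfs (fun _ _ => hstep) hft₀ n t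
      (by rw [ht, ht₀]; ring)
    rw [this, hgt₀, ht, ht₀]
    ring

end PhaseShift

theorem stmt1_general (a α φ β : ℝ → ℝ)
    (hapos : ∀ t, 0 < a t) (haα : ∀ t, 0 < a t + α t)
    (hφ : ContDiff ℝ 1 φ) (hβ : ContDiff ℝ 1 β)
    (hφ' : ∀ t, 0 < deriv φ t) (hφβ' : ∀ t, 0 < deriv φ t + deriv β t)
    (hφsurj : Function.Surjective φ)
    (heq : ∀ t, a t * Real.cos (φ t) = (a t + α t) * Real.cos (φ t + β t)) :
    ∃ k : ℤ, Even k ∧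
      ∀ (n : ℤ) (tn : ℝ), φ tn = (n + 1/2) * π → β tn = k * π := by
  have hφd : Differentiable ℝ φ := hφ.differentiable one_ne_zero
  have hβd : Differentiable ℝ β := hβ.differentiable one_ne_zero
  have hψ : StrictMono (fun t => φ t + β t) :=
    strictMono_of_deriv_pos fun t => ((hφd t).hasDerivAt.add (hβd t).hasDerivAt).deriv ▸ hφβ' t
  have hzero : ∀ t, cos (φ t) = 0 ↔ cos (φ t + β t) = 0 := fun t => by
    have := heq t
    constructor <;> intro h
    · simpa [h, (haα t).ne'] using this.symm
    · simpa [h, (hapos t).ne'] using this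
  have hpos : ∀ t, 0 < cos (φ t) → 0 < cos (φ t + β t) := fun t h =>
    pos_of_mul_pos_right (heq t ▸ mul_pos (hapos t) h) (haα t).le
  obtain ⟨k, hk, hshift⟩ := exists_even_phase_shift (strictMono_of_deriv_pos hφ') hφsurj hψ
    (hφd.continuous.add hβd.continuous) hzero hpos
  exact ⟨k, hk, fun n tn h => by linarith [hshift n tn h]⟩

theorem stmt1 (a α φ β : ℝ → ℝ)
    (ha : Continuous a) (hα : Continuous α)
    (hapos : ∀ t, 0 < a t) (haα : ∀ t, 0 < a t + α t)
    (hφ : ContDiff ℝ 1 φ) (hβ : ContDiff ℝ 1 β)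
    (hφ' : ∀ t, 0 < deriv φ t) (hφβ' : ∀ t, 0 < deriv φ t + deriv β t)
    (hφsurj : Function.Surjective φ)
    (heq : ∀ t, a t * Real.cos (φ t) = (a t + α t) * Real.cos (φ t + β t)) :
    ∃ k : ℤ, Even k ∧
      ∀ (n : ℤ) (tn : ℝ), φ tn = (n + 1/2) * π → β tn = k * π :=
  stmt1_general a α φ β hapos haα hφ hβ hφ' hφβ' hφsurj heq
end

section
/- Under the identifiability setup with the normalization $\beta(t_n)=0$ for all $n$, for any $t',t''\in[t_n,t_{n+1}]$ one has $|\beta(t')-\beta(t'')|<\pi$, where $t_n=\phi^{-1}((n+1/2)\pi)$. -/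
open Real Set

theorem abs_sub_lt_of_strictMonoOn_Icc {f h : ℝ → ℝ} {a b c : ℝ}
    (hf : StrictMonoOn f (Icc a b)) (hfh : StrictMonoOn (fun t => f t + h t) (Icc a b))
    (hfc : f b - f a ≤ c) (hfhc : f b + h b - (f a + h a) ≤ c) (hc : 0 < c)
    {x y : ℝ} (hx : x ∈ Icc a b) (hy : y ∈ Icc a b) : |h x - h y| < c := by
  wlog hxy : x ≤ y generalizing x y
  · rw [abs_sub_comm]
    exact this hy hx (le_of_not_ge hxy)
  rcases hxy.eq_or_lt with rfl | hlt
  · simpa using hc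
  have ha : a ∈ Icc a b := left_mem_Icc.2 (hx.1.trans hx.2)
  have hb : b ∈ Icc a b := right_mem_Icc.2 (hx.1.trans hx.2)
  have hf_ax := hf.monotoneOn ha hx hx.1
  have hf_yb := hf.monotoneOn hy hb hy.2
  have hf_xy := hf hx hy hlt
  have hfh_ax := hfh.monotoneOn ha hx hx.1
  have hfh_yb := hfh.monotoneOn hy hb hy.2
  have hfh_xy := hfh hx hy hlt
  -- `h y - h x` is less than the rise of `f + h`, and `h x - h y` less than the rise of `f`.
  rw [abs_lt]
  constructor <;> linarith

theorem stmt2_general (φ β : ℝ → ℝ)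
    (hβ : ContDiff ℝ 1 β)
    (hφ' : ∀ t, 0 < deriv φ t) (hφβ' : ∀ t, 0 < deriv φ t + deriv β t)
    (n : ℤ) (tn tn1 : ℝ)
    (htn : φ tn = (n + 1/2) * π) (htn1 : φ tn1 = (n + 1 + 1/2) * π)
    (hβtn : β tn = 0) (hβtn1 : β tn1 = 0)
    (t' t'' : ℝ) (ht' : t' ∈ Set.Icc tn tn1) (ht'' : t'' ∈ Set.Icc tn tn1) :
    |β t' - β t''| < π := by
  -- `deriv φ t` would be the junk value `0` were `φ` not differentiable at `t`.
  have hφ_diff (t : ℝ) : DifferentiableAt ℝ φ t := differentiableAt_of_deriv_ne_zero (hφ' t).ne'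
  have hφ_mono : StrictMono φ := strictMono_of_deriv_pos hφ'
  have hφβ_mono : StrictMono (fun t => φ t + β t) := strictMono_of_deriv_pos fun t => by
    rw [deriv_fun_add (hφ_diff t) (hβ.differentiable one_ne_zero t)]
    exact hφβ' t
  exact abs_sub_lt_of_strictMonoOn_Icc (hφ_mono.strictMonoOn _) (hφβ_mono.strictMonoOn _)
    (by rw [htn, htn1]; linarith) (by rw [htn, htn1, hβtn, hβtn1]; linarith) pi_pos ht' ht''

theorem stmt2 (φ β : ℝ → ℝ)
    (hφ : ContDiff ℝ 1 φ) (hβ : ContDiff ℝ 1 β)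
    (hφ' : ∀ t, 0 < deriv φ t) (hφβ' : ∀ t, 0 < deriv φ t + deriv β t)
    (hφsurj : Function.Surjective φ)
    (n : ℤ) (tn tn1 : ℝ)
    (htn : φ tn = (n + 1/2) * π) (htn1 : φ tn1 = (n + 1 + 1/2) * π)
    (hβtn : β tn = 0) (hβtn1 : β tn1 = 0)
    (t' t'' : ℝ) (ht' : t' ∈ Set.Icc tn tn1) (ht'' : t'' ∈ Set.Icc tn tn1) :
    |β t' - β t''| < π :=
  stmt2_general φ β hβ hφ' hφβ' n tn tn1 htn htn1 hβtn hβtn1 t' t'' ht' ht''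
end

section
/- Under the identifiability setup with normalization $\beta(t_n)=0$, at each $t_n=\phi^{-1}((n+1/2)\pi)$ one has $\frac{a(t_n)}{a(t_n)+\alpha(t_n)}=\frac{\phi'(t_n)+\beta'(t_n)}{\phi'(t_n)}$; in particular $\alpha(t_n)=0$ if and only if $\beta'(t_n)=0$. -/
open Real Filter Topology

/- Along the zeros `tₙ` of `cos φ` (where also `cos (φ + β)` vanishes, since `β tₙ = 0`) the identity
`a cos φ = (a + α) cos (φ + β)` is of the form `0 = 0`; dividing by `t - tₙ` and letting `t → tₙ`
(L'Hôpital) gives `a φ' sin φ = (a + α) (φ' + β') sin φ` at `tₙ`, and `sin φ(tₙ) = ±1`. -/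

theorem cos_int_add_half_mul_pi (n : ℤ) : cos ((n + 1 / 2) * π) = 0 :=
  cos_eq_zero_iff.mpr ⟨n, by ring⟩

theorem sin_ne_zero_of_cos_eq_zero {x : ℝ} (h : cos x = 0) : sin x ≠ 0 := by
  intro hs
  simpa [hs, h] using sin_sq_add_cos_sq x

theorem mul_derivs_eq_of_mul_eq_mul {𝕜 : Type*} [NontriviallyNormedField 𝕜] {u v f g : 𝕜 → 𝕜}
    {x f' g' : 𝕜} (hu : ContinuousAt u x) (hv : ContinuousAt v x)
    (hf : HasDerivAt f f' x) (hg : HasDerivAt g g' x) (hfx : f x = 0) (hgx : g x = 0)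
    (h : ∀ t, u t * f t = v t * g t) :
    u x * f' = v x * g' := by
  have hu_slope : Tendsto (fun t => u t * slope f x t) (𝓝[≠] x) (𝓝 (u x * f')) :=
    (hu.tendsto.mono_left nhdsWithin_le_nhds).mul (hasDerivAt_iff_tendsto_slope.mp hf)
  have hv_slope : Tendsto (fun t => v t * slope g x t) (𝓝[≠] x) (𝓝 (v x * g')) :=
    (hv.tendsto.mono_left nhdsWithin_le_nhds).mul (hasDerivAt_iff_tendsto_slope.mp hg)
  have h_slope : ∀ t, u t * slope f x t = v t * slope g x t := by
    intro t
    simp only [slope_def_field, hfx, hgx, sub_zero, ← mul_div_assoc, h t]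
  exact tendsto_nhds_unique (hu_slope.congr h_slope) hv_slope

theorem stmt4_general (a α φ β : ℝ → ℝ)
    (ha : Continuous a) (hα : Continuous α)
    (haα : ∀ t, 0 < a t + α t)
    (hφ : ContDiff ℝ 1 φ) (hβ : ContDiff ℝ 1 β)
    (hφ' : ∀ t, 0 < deriv φ t)
    (heq : ∀ t, a t * Real.cos (φ t) = (a t + α t) * Real.cos (φ t + β t))
    (n : ℤ) (tn : ℝ) (htn : φ tn = (n + 1/2) * π) (hβtn : β tn = 0) :
    a tn / (a tn + α tn) = (deriv φ tn + deriv β tn) / deriv φ tn ∧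
    (α tn = 0 ↔ deriv β tn = 0) := by
  have hφd := (hφ.differentiable one_ne_zero tn).hasDerivAt
  have hβd := (hβ.differentiable one_ne_zero tn).hasDerivAt
  have hcos : cos (φ tn) = 0 := htn ▸ cos_int_add_half_mul_pi n
  have hderivs := mul_derivs_eq_of_mul_eq_mul (v := fun t => a t + α t)
    (g := fun t => cos (φ t + β t)) ha.continuousAt (ha.add hα).continuousAt
    hφd.cos (hφd.add hβd).cos hcos (by rwa [hβtn, add_zero]) heq
  rw [Pi.add_apply, hβtn, add_zero] at hderivs
  have hkey : a tn * deriv φ tn = (a tn + α tn) * (deriv φ tn + deriv β tn) :=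
    mul_left_cancel₀ (sin_ne_zero_of_cos_eq_zero hcos) (by linear_combination -hderivs)
  have hratio : a tn / (a tn + α tn) = (deriv φ tn + deriv β tn) / deriv φ tn := by
    rw [div_eq_div_iff (haα tn).ne' (hφ' tn).ne', hkey, mul_comm]
  refine ⟨hratio, ?_⟩
  calc α tn = 0 ↔ a tn / (a tn + α tn) = 1 := by
        rw [div_eq_one_iff_eq (haα tn).ne', left_eq_add]
    _ ↔ deriv β tn = 0 := by rw [hratio, div_eq_one_iff_eq (hφ' tn).ne', add_eq_left]

theorem stmt4 (a α φ β : ℝ → ℝ)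
    (ha : Continuous a) (hα : Continuous α)
    (hapos : ∀ t, 0 < a t) (haα : ∀ t, 0 < a t + α t)
    (hφ : ContDiff ℝ 1 φ) (hβ : ContDiff ℝ 1 β)
    (hφ' : ∀ t, 0 < deriv φ t) (hφβ' : ∀ t, 0 < deriv φ t + deriv β t)
    (hφsurj : Function.Surjective φ)
    (heq : ∀ t, a t * Real.cos (φ t) = (a t + α t) * Real.cos (φ t + β t))
    (n : ℤ) (tn : ℝ) (htn : φ tn = (n + 1/2) * π) (hβtn : β tn = 0) :
    a tn / (a tn + α tn) = (deriv φ tn + deriv β tn) / deriv φ tn ∧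
    (α tn = 0 ↔ deriv β tn = 0) :=
  stmt4_general a α φ β ha hα haα hφ hβ hφ' heq n tn htn hβtn
end

section
/- Suppose $g(t)=a(t)\cos\phi(t)=(a(t)+\alpha(t))\cos(\phi(t)+\beta(t))$ where both representations lie in the class $\mathcal{Q}^{c_1,c_2,c_3}_\epsilon$ (so in particular $|a'|\le\epsilon\phi'$, $|a'+\alpha'|\le\epsilon(\phi'+\beta')$, $c_1\le\phi',\phi'+\beta'\le c_2$, amplitudes in $[c_1,c_2]$), with the normalization $\beta(t_n)=0$ at $t_n=\phi^{-1}((n+1/2)\pi)$. Then $|\alpha(t)|\le 2\pi\epsilon$ for all $t\in\mathbb{R}$. -/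
/-!
Let `G = ε (2φ + β)`. Since `α' = (a + α)' - a'`, the two amplitude bounds give `|α'| ≤ G'`, so the
oscillation of `α` over an interval is at most the increase of `G`. Between consecutive
normalization points `t_m < t_{m+1}` the phase `φ` increases by `π` and `β` vanishes at both ends,
so `G` increases by exactly `2πε`. In that interval there is a point where `φ = (m+1)π` and one
where `φ + β = (m+1)π`; there `cos` equals `±1` on one side of `a cos φ = (a + α) cos (φ + β)`,
which forces `α ≥ 0` at the first point and `α ≤ 0` at the second. Hence `|α| ≤ 2πε` on the
whole interval.
-/

open Real Set

section Oscillation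

variable {f G : ℝ → ℝ}

lemma abs_sub_le_sub_of_abs_deriv_le (hf : Differentiable ℝ f) (hG : Differentiable ℝ G)
    (h : ∀ u, |deriv f u| ≤ deriv G u) {x y : ℝ} (hxy : x ≤ y) :
    |f y - f x| ≤ G y - G x := by
  have hsub : Monotone (G - f) := monotone_of_deriv_nonneg (hG.sub hf) fun u => by
    rw [deriv_sub (hG u) (hf u)]
    linarith [le_abs_self (deriv f u), h u]
  have hadd : Monotone (G + f) := monotone_of_deriv_nonneg (hG.add hf) fun u => by
    rw [deriv_add (hG u) (hf u)]
    linarith [neg_abs_le (deriv f u), h u]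
  have h₁ := hsub hxy
  have h₂ := hadd hxy
  simp only [Pi.sub_apply, Pi.add_apply] at h₁ h₂
  rw [abs_le]
  constructor <;> linarith

lemma abs_sub_le_of_abs_deriv_le_of_mem_Icc (hf : Differentiable ℝ f) (hG : Differentiable ℝ G)
    (h : ∀ u, |deriv f u| ≤ deriv G u) {a b x y : ℝ} (hx : x ∈ Icc a b) (hy : y ∈ Icc a b) :
    |f y - f x| ≤ G b - G a := by
  have hGm : Monotone G := monotone_of_deriv_nonneg hG fun u => (abs_nonneg _).trans (h u)
  rcases le_total x y with hxy | hyx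
  · exact (abs_sub_le_sub_of_abs_deriv_le hf hG h hxy).trans (by linarith [hGm hx.1, hGm hy.2])
  · rw [abs_sub_comm]
    exact (abs_sub_le_sub_of_abs_deriv_le hf hG h hyx).trans (by linarith [hGm hy.1, hGm hx.2])

lemma abs_le_of_abs_sub_le_of_nonneg_of_nonpos {s : Set ℝ} {K : ℝ}
    (hosc : ∀ x ∈ s, ∀ y ∈ s, |f y - f x| ≤ K) {p q t : ℝ} (hp : p ∈ s) (hq : q ∈ s)
    (hfp : 0 ≤ f p) (hfq : f q ≤ 0) (ht : t ∈ s) : |f t| ≤ K := by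
  have h₁ := abs_le.1 (hosc p hp t ht)
  have h₂ := abs_le.1 (hosc q hq t ht)
  rw [abs_le]
  constructor <;> linarith

end Oscillation

lemma abs_sub_le_of_abs_deriv_amplitude_le {ε : ℝ} {a α φ β : ℝ → ℝ} (hα : Differentiable ℝ α)
    (hφ : Differentiable ℝ φ) (hβ : Differentiable ℝ β)
    (ha' : ∀ t, |deriv a t| ≤ ε * deriv φ t)
    (hA' : ∀ t, |deriv a t + deriv α t| ≤ ε * (deriv φ t + deriv β t))
    {x y u v : ℝ} (hu : u ∈ Icc x y) (hv : v ∈ Icc x y) :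
    |α v - α u| ≤ ε * (2 * φ y + β y) - ε * (2 * φ x + β x) := by
  have hG : ∀ t, HasDerivAt (fun t => ε * (2 * φ t + β t)) (ε * (2 * deriv φ t + deriv β t)) t :=
    fun t => (((hφ t).hasDerivAt.const_mul 2).add (hβ t).hasDerivAt).const_mul ε
  refine abs_sub_le_of_abs_deriv_le_of_mem_Icc hα (fun t => (hG t).differentiableAt)
    (fun t => ?_) hu hv
  rw [(hG t).deriv]
  calc |deriv α t| = |(deriv a t + deriv α t) - deriv a t| := by ring_nf
    _ ≤ |deriv a t + deriv α t| + |deriv a t| := abs_sub _ _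
    _ ≤ ε * (2 * deriv φ t + deriv β t) := by linarith [hA' t, ha' t]

lemma le_of_mul_cos_eq_mul_cos_add {a b θ δ : ℝ} (hb : 0 ≤ b) (hθ : sin θ = 0)
    (h : a * cos θ = b * cos (θ + δ)) : a ≤ b := by
  have hcos : cos θ ≠ 0 := by
    intro hc
    simpa [hθ, hc] using sin_sq_add_cos_sq θ
  rw [cos_add, hθ, zero_mul, sub_zero, ← mul_assoc, mul_comm _ (cos θ), mul_comm b,
    mul_assoc] at h
  rw [mul_left_cancel₀ hcos h]
  exact mul_le_of_le_one_right hb (cos_le_one δ)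

lemma ge_of_mul_cos_eq_mul_cos_add {a b θ δ : ℝ} (ha : 0 ≤ a) (hθδ : sin (θ + δ) = 0)
    (h : a * cos θ = b * cos (θ + δ)) : b ≤ a :=
  le_of_mul_cos_eq_mul_cos_add ha hθδ (by rw [add_neg_cancel_right]; exact h.symm)

lemma exists_Icc_between_half_integer_phases {φ : ℝ → ℝ} (hmono : StrictMono φ)
    (hsurj : Function.Surjective φ) (t : ℝ) :
    ∃ m : ℤ, ∃ x y, φ x = (m + 1/2) * π ∧ φ y = ((m + 1 : ℤ) + 1/2) * π ∧ t ∈ Icc x y := by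
  set m := ⌊φ t / π - 1/2⌋
  have hlo := Int.floor_le (φ t / π - 1/2)
  have hhi := Int.lt_floor_add_one (φ t / π - 1/2)
  obtain ⟨x, hx⟩ := hsurj ((m + 1/2) * π)
  obtain ⟨y, hy⟩ := hsurj (((m + 1 : ℤ) + 1/2) * π)
  refine ⟨m, x, y, hx, hy, hmono.le_iff_le.1 ?_, hmono.le_iff_le.1 ?_⟩
  · rw [hx, ← le_div_iff₀ pi_pos]
    linarith
  · rw [hy, ← div_le_iff₀ pi_pos]
    push_cast
    linarith

lemma exists_mem_Icc_sin_eq_zero {f : ℝ → ℝ} (hf : Continuous f) {m : ℤ} {x y : ℝ} (hxy : x ≤ y)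
    (hx : f x = (m + 1/2) * π) (hy : f y = ((m + 1 : ℤ) + 1/2) * π) :
    ∃ p ∈ Icc x y, sin (f p) = 0 := by
  have hmid : ((m + 1 : ℤ) : ℝ) * π ∈ Icc (f x) (f y) := by
    rw [hx, hy]
    push_cast
    constructor <;> nlinarith [pi_pos]
  obtain ⟨p, hp, hfp⟩ := intermediate_value_Icc hxy hf.continuousOn hmid
  exact ⟨p, hp, hfp ▸ sin_int_mul_pi (m + 1)⟩

theorem stmt6_general (ε c1 : ℝ)
    (hε : 0 ≤ ε) (hεc1 : ε < c1)
    (a α φ β : ℝ → ℝ)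
    (hα : ContDiff ℝ 1 α)
    (hφ : ContDiff ℝ 3 φ) (hβ : ContDiff ℝ 3 β)
    -- first representation lies in Q^{c1,c2,c3}_ε
    (ha1 : ∀ t, c1 ≤ a t)
    (hφ1 : ∀ t, c1 ≤ deriv φ t)
    (ha' : ∀ t, |deriv a t| ≤ ε * deriv φ t)
    -- second representation lies in Q^{c1,c2,c3}_ε
    (hA1 : ∀ t, c1 ≤ a t + α t)
    (hA' : ∀ t, |deriv a t + deriv α t| ≤ ε * (deriv φ t + deriv β t))
    (hφsurj : Function.Surjective φ)
    (heq : ∀ t, a t * Real.cos (φ t) = (a t + α t) * Real.cos (φ t + β t))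
    -- normalization : β vanishes at the points t_n = φ⁻¹((n+1/2)π)
    (hnorm : ∀ (n : ℤ) (tn : ℝ), φ tn = (n + 1/2) * π → β tn = 0) :
    ∀ t, |α t| ≤ 2 * π * ε := by
  have hc1 : 0 < c1 := hε.trans_lt hεc1
  have hφd : Differentiable ℝ φ := hφ.differentiable (by norm_num)
  have hβd : Differentiable ℝ β := hβ.differentiable (by norm_num)
  intro t
  obtain ⟨m, x, y, hx, hy, ht⟩ := exists_Icc_between_half_integer_phases
    (strictMono_of_deriv_pos fun u => hc1.trans_le (hφ1 u)) hφsurj t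
  have hβx := hnorm m x hx
  have hβy := hnorm (m + 1) y hy
  have hosc : ∀ u ∈ Icc x y, ∀ v ∈ Icc x y, |α v - α u| ≤ 2 * π * ε := fun u hu v hv =>
    (abs_sub_le_of_abs_deriv_amplitude_le (hα.differentiable one_ne_zero) hφd hβd ha' hA'
      hu hv).trans_eq (by rw [hx, hy, hβx, hβy]; push_cast; ring)
  obtain ⟨p, hp, hφp⟩ := exists_mem_Icc_sin_eq_zero hφd.continuous (ht.1.trans ht.2) hx hy
  obtain ⟨q, hq, hψq⟩ := exists_mem_Icc_sin_eq_zero (f := fun u => φ u + β u)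
    (hφd.continuous.add hβd.continuous) (ht.1.trans ht.2)
    (by rw [hβx, add_zero, hx]) (by rw [hβy, add_zero, hy])
  refine abs_le_of_abs_sub_le_of_nonneg_of_nonpos hosc hp hq ?_ ?_ ht
  · linarith [le_of_mul_cos_eq_mul_cos_add (hc1.le.trans (hA1 p)) hφp (heq p)]
  · linarith [ge_of_mul_cos_eq_mul_cos_add (hc1.le.trans (ha1 q)) hψq (heq q)]

theorem stmt6 (ε c1 c2 c3 : ℝ)
    (hε : 0 ≤ ε) (hεc1 : ε < c1) (hc12 : c1 < c2) (hεc3 : ε < c3) (hc32 : c3 < c2)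
    (a α φ β : ℝ → ℝ)
    (ha : ContDiff ℝ 1 a) (hα : ContDiff ℝ 1 α)
    (hφ : ContDiff ℝ 3 φ) (hβ : ContDiff ℝ 3 β)
    -- first representation lies in Q^{c1,c2,c3}_ε
    (ha1 : ∀ t, c1 ≤ a t) (ha2 : ∀ t, a t ≤ c2)
    (hφ1 : ∀ t, c1 ≤ deriv φ t) (hφ2 : ∀ t, deriv φ t ≤ c2)
    (hφ'' : ∀ t, |deriv (deriv φ) t| ≤ c3)
    (ha' : ∀ t, |deriv a t| ≤ ε * deriv φ t)
    (hφ''' : ∀ t, |deriv (deriv (deriv φ)) t| ≤ ε * deriv φ t)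
    -- second representation lies in Q^{c1,c2,c3}_ε
    (hA1 : ∀ t, c1 ≤ a t + α t) (hA2 : ∀ t, a t + α t ≤ c2)
    (hψ1 : ∀ t, c1 ≤ deriv φ t + deriv β t) (hψ2 : ∀ t, deriv φ t + deriv β t ≤ c2)
    (hψ'' : ∀ t, |deriv (deriv φ) t + deriv (deriv β) t| ≤ c3)
    (hA' : ∀ t, |deriv a t + deriv α t| ≤ ε * (deriv φ t + deriv β t))
    (hψ''' : ∀ t, |deriv (deriv (deriv φ)) t + deriv (deriv (deriv β)) t|
        ≤ ε * (deriv φ t + deriv β t))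
    (hφsurj : Function.Surjective φ)
    (heq : ∀ t, a t * Real.cos (φ t) = (a t + α t) * Real.cos (φ t + β t))
    -- normalization : β vanishes at the points t_n = φ⁻¹((n+1/2)π)
    (hnorm : ∀ (n : ℤ) (tn : ℝ), φ tn = (n + 1/2) * π → β tn = 0) :
    ∀ t, |α t| ≤ 2 * π * ε :=
  stmt6_general ε c1 hε hεc1 a α φ β hα hφ hβ ha1 hφ1 ha' hA1 hA' hφsurj heq hnorm
end

section
/- For a one-dimensional optimal transport problem with cost $d(x,y)=|x-y|$, if $\mu$ and $\nu$ are probability measures on $\mathbb{R}$ with cumulative distribution functions $f_\mu$ and $f_\nu$, then $\inf_{\rho\in\mathcal{P}(\mu,\nu)}\int |x-y|\,d\rho(x,y)=\int_{\mathbb{R}}|f_\mu(x)-f_\nu(x)|\,dx$, where $\mathcal{P}(\mu,\nu)$ is the set of couplings of $\mu$ and $\nu$. -/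
open MeasureTheory ProbabilityTheory Set Filter
open scoped symmDiff

/-!
Write `C t` for the event that exactly one coordinate of `p : ℝ × ℝ` is `≤ t`. Since `|x - y|` is
the length of `{t | exactly one of x, y is ≤ t}`, Tonelli turns the cost of a coupling `ρ` into
`∫ ρ (C t) dt`. As `C t` is the symmetric difference of two events of probabilities `F_μ t` and
`F_ν t`, each integrand is at least `|F_μ t - F_ν t|`. The quantile coupling
`u ↦ (F_μ⁻¹ u, F_ν⁻¹ u)` with `u` uniform on `(0, 1)` attains this bound for every `t`, because its
two events are `{u ≤ F_μ t}` and `{u ≤ F_ν t}`, which are nested. Finite first moments make every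
cost finite, so the infimum over the real-valued costs is attained by the quantile coupling.
-/

theorem Set.Ici_symmDiff_Ici {α : Type*} [LinearOrder α] (a b : α) :
    Ici a ∆ Ici b = Ico (min a b) (max a b) := by
  ext x
  simp only [mem_symmDiff, mem_Ici, mem_Ico, min_le_iff, ← not_le, max_le_iff]
  tauto

theorem Set.Iic_symmDiff_Iic {α : Type*} [LinearOrder α] (a b : α) :
    Iic a ∆ Iic b = Ioc (min a b) (max a b) := by
  ext x
  simp only [mem_symmDiff, mem_Iic, mem_Ioc, le_max_iff, ← not_le, le_min_iff]
  tauto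

namespace MeasureTheory

theorem lintegral_ofReal_abs_sub_eq_lintegral_measure_symmDiff
    (ρ : Measure (ℝ × ℝ)) [SFinite ρ] :
    ∫⁻ p, ENNReal.ofReal |p.1 - p.2| ∂ρ
      = ∫⁻ t, ρ ((Prod.fst ⁻¹' Iic t) ∆ (Prod.snd ⁻¹' Iic t)) := by
  set S : Set ((ℝ × ℝ) × ℝ) := {q | q.1.1 ≤ q.2} ∆ {q | q.1.2 ≤ q.2}
  have hS : MeasurableSet S :=
    (measurableSet_le (by fun_prop) (by fun_prop)).symmDiff
      (measurableSet_le (by fun_prop) (by fun_prop))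
  calc ∫⁻ p, ENNReal.ofReal |p.1 - p.2| ∂ρ = ∫⁻ p, volume (Prod.mk p ⁻¹' S) ∂ρ := by
        congr! 2 with p
        rw [show Prod.mk p ⁻¹' S = Ici p.1 ∆ Ici p.2 from rfl, Ici_symmDiff_Ici, Real.volume_Ico,
          max_sub_min_eq_abs']
    _ = ∫⁻ t, ρ ((fun p => (p, t)) ⁻¹' S) := by
        rw [← Measure.prod_apply hS, Measure.prod_apply_symm hS]
    _ = _ := rfl

theorem integrable_abs_sub_of_map {μ ν : Measure ℝ} {ρ : Measure (ℝ × ℝ)}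
    (h₁ : ρ.map Prod.fst = μ) (h₂ : ρ.map Prod.snd = ν)
    (hμ : Integrable (fun x : ℝ => |x|) μ) (hν : Integrable (fun x : ℝ => |x|) ν) :
    Integrable (fun p : ℝ × ℝ => |p.1 - p.2|) ρ := by
  rw [← h₁, integrable_map_measure (by fun_prop) (by fun_prop)] at hμ
  rw [← h₂, integrable_map_measure (by fun_prop) (by fun_prop)] at hν
  refine (hμ.add hν).mono' (by fun_prop) (ae_of_all _ fun p => ?_)
  simpa only [Real.norm_eq_abs, abs_abs, Pi.add_apply, Function.comp_apply] using abs_sub p.1 p.2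

end MeasureTheory

namespace ProbabilityTheory

theorem ofReal_abs_cdf_sub_le_measure_symmDiff {μ ν : Measure ℝ} [IsProbabilityMeasure μ]
    [IsProbabilityMeasure ν] {ρ : Measure (ℝ × ℝ)} [IsFiniteMeasure ρ]
    (h₁ : ρ.map Prod.fst = μ) (h₂ : ρ.map Prod.snd = ν) (t : ℝ) :
    ENNReal.ofReal |cdf μ t - cdf ν t|
      ≤ ρ ((Prod.fst ⁻¹' Iic t) ∆ (Prod.snd ⁻¹' Iic t)) := by
  rw [cdf_eq_real, cdf_eq_real, ← h₁, ← h₂, map_measureReal_apply measurable_fst measurableSet_Iic,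
    map_measureReal_apply measurable_snd measurableSet_Iic]
  exact ENNReal.ofReal_le_of_le_toReal <| abs_measureReal_sub_le_measureReal_symmDiff
    (measurableSet_Iic.preimage measurable_fst).nullMeasurableSet
    (measurableSet_Iic.preimage measurable_snd).nullMeasurableSet

theorem lintegral_ofReal_abs_cdf_sub_le {μ ν : Measure ℝ} [IsProbabilityMeasure μ]
    [IsProbabilityMeasure ν] {ρ : Measure (ℝ × ℝ)} [IsFiniteMeasure ρ]
    (h₁ : ρ.map Prod.fst = μ) (h₂ : ρ.map Prod.snd = ν) :
    ∫⁻ t, ENNReal.ofReal |cdf μ t - cdf ν t| ≤ ∫⁻ p, ENNReal.ofReal |p.1 - p.2| ∂ρ := by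
  rw [lintegral_ofReal_abs_sub_eq_lintegral_measure_symmDiff]
  exact lintegral_mono (ofReal_abs_cdf_sub_le_measure_symmDiff h₁ h₂)

/-- For `u ∉ (0, 1)` the set is empty or unbounded below, and `sInf` returns the junk value `0`. -/
noncomputable def quantile (μ : Measure ℝ) (u : ℝ) : ℝ := sInf {x | u ≤ cdf μ x}

section Quantile

variable {μ : Measure ℝ} {u : ℝ}

theorem nonempty_setOf_le_cdf (hu : u < 1) : {x | u ≤ cdf μ x}.Nonempty :=
  ((tendsto_cdf_atTop μ).eventually (eventually_ge_nhds hu)).exists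

theorem bddBelow_setOf_le_cdf (hu : 0 < u) : BddBelow {x | u ≤ cdf μ x} := by
  obtain ⟨z, hz⟩ := eventually_atBot.1 ((tendsto_cdf_atBot μ).eventually (eventually_lt_nhds hu))
  exact ⟨z, fun x hx => le_of_not_gt fun hxz => (hz x hxz.le).not_ge hx⟩

theorem le_cdf_quantile (hu : u ∈ Ioo 0 1) : u ≤ cdf μ (quantile μ u) := by
  have hright : ∀ y ∈ Ioi (quantile μ u), u ≤ cdf μ y := by
    intro y hy
    rw [quantile, mem_Ioi] at hy
    obtain ⟨s, hs, hsy⟩ := Real.lt_sInf_add_pos (nonempty_setOf_le_cdf hu.2) (sub_pos.2 hy)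
    exact hs.trans (monotone_cdf μ (by linarith))
  exact ge_of_tendsto (((cdf μ).right_continuous _).mono Ioi_subset_Ici_self).tendsto
    (eventually_nhdsWithin_of_forall hright)

theorem quantile_le_iff (hu : u ∈ Ioo 0 1) (x : ℝ) : quantile μ u ≤ x ↔ u ≤ cdf μ x :=
  ⟨fun h => (le_cdf_quantile hu).trans (monotone_cdf μ h),
    fun h => csInf_le (bddBelow_setOf_le_cdf hu.1) h⟩

theorem monotoneOn_quantile : MonotoneOn (quantile μ) (Ioo 0 1) :=
  fun _ hu _ hv huv => (quantile_le_iff hu _).2 (huv.trans (le_cdf_quantile hv))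

end Quantile

noncomputable def unitUniform : Measure ℝ := volume.restrict (Ioo 0 1)

instance : IsProbabilityMeasure unitUniform :=
  ⟨by rw [unitUniform, Measure.restrict_apply_univ, Real.volume_Ioo]; norm_num⟩

theorem unitUniform_Ioc {c d : ℝ} (hc : 0 ≤ c) (hd : d ≤ 1) :
    unitUniform (Ioc c d) = ENNReal.ofReal (d - c) := by
  rw [unitUniform, Measure.restrict_apply' measurableSet_Ioo,
    measure_congr ((ae_eq_refl _).inter Ioo_ae_eq_Ioc), Ioc_inter_Ioc, max_eq_left hc,
    min_eq_left hd, Real.volume_Ioc]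

theorem unitUniform_eq_of_forall_mem_Ioo {s t : Set ℝ} (h : ∀ u ∈ Ioo 0 1, u ∈ s ↔ u ∈ t) :
    unitUniform s = unitUniform t :=
  measure_congr <| ae_restrict_of_forall_mem measurableSet_Ioo fun u hu => propext (h u hu)

theorem aemeasurable_quantile (μ : Measure ℝ) : AEMeasurable (quantile μ) unitUniform :=
  aemeasurable_restrict_of_monotoneOn measurableSet_Ioo monotoneOn_quantile

theorem map_quantile_unitUniform (μ : Measure ℝ) [IsProbabilityMeasure μ] :
    unitUniform.map (quantile μ) = μ := by
  have := Measure.isProbabilityMeasure_map (μ := unitUniform) (aemeasurable_quantile μ)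
  refine Measure.eq_of_cdf _ _ (StieltjesFunction.ext fun x => ?_)
  rw [← ENNReal.ofReal_eq_ofReal_iff (cdf_nonneg _ x) (cdf_nonneg μ x), ofReal_cdf,
    Measure.map_apply_of_aemeasurable (aemeasurable_quantile μ) measurableSet_Iic,
    ← sub_zero (cdf μ x), ← unitUniform_Ioc le_rfl (cdf_le_one μ x)]
  exact unitUniform_eq_of_forall_mem_Ioo fun u hu => (quantile_le_iff hu x).trans
    (and_iff_right hu.1).symm

section QuantileCoupling

variable (μ ν : Measure ℝ)

noncomputable def quantileCoupling : Measure (ℝ × ℝ) :=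
  unitUniform.map fun u => (quantile μ u, quantile ν u)

theorem aemeasurable_quantile_prodMk :
    AEMeasurable (fun u => (quantile μ u, quantile ν u)) unitUniform :=
  (aemeasurable_quantile μ).prodMk (aemeasurable_quantile ν)

instance : IsProbabilityMeasure (quantileCoupling μ ν) :=
  Measure.isProbabilityMeasure_map (aemeasurable_quantile_prodMk μ ν)

theorem map_fst_quantileCoupling [IsProbabilityMeasure μ] :
    (quantileCoupling μ ν).map Prod.fst = μ := by
  rw [quantileCoupling, AEMeasurable.map_map_of_aemeasurable (by fun_prop)
    (aemeasurable_quantile_prodMk μ ν)]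
  exact map_quantile_unitUniform μ

theorem map_snd_quantileCoupling [IsProbabilityMeasure ν] :
    (quantileCoupling μ ν).map Prod.snd = ν := by
  rw [quantileCoupling, AEMeasurable.map_map_of_aemeasurable (by fun_prop)
    (aemeasurable_quantile_prodMk μ ν)]
  exact map_quantile_unitUniform ν

theorem quantileCoupling_symmDiff (t : ℝ) :
    quantileCoupling μ ν ((Prod.fst ⁻¹' Iic t) ∆ (Prod.snd ⁻¹' Iic t))
      = ENNReal.ofReal |cdf μ t - cdf ν t| := by
  have hmeas : MeasurableSet ((Prod.fst ⁻¹' Iic t) ∆ (Prod.snd ⁻¹' Iic t) : Set (ℝ × ℝ)) :=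
    (measurableSet_Iic.preimage measurable_fst).symmDiff
      (measurableSet_Iic.preimage measurable_snd)
  rw [quantileCoupling, Measure.map_apply_of_aemeasurable (aemeasurable_quantile_prodMk μ ν) hmeas,
    abs_sub_comm, ← max_sub_min_eq_abs, ← unitUniform_Ioc (le_min (cdf_nonneg μ t) (cdf_nonneg ν t))
      (max_le (cdf_le_one μ t) (cdf_le_one ν t)), ← Iic_symmDiff_Iic]
  refine unitUniform_eq_of_forall_mem_Ioo fun u hu => ?_
  simp only [mem_preimage, mem_symmDiff, mem_Iic, quantile_le_iff hu]

theorem lintegral_quantileCoupling :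
    ∫⁻ p, ENNReal.ofReal |p.1 - p.2| ∂quantileCoupling μ ν
      = ∫⁻ t, ENNReal.ofReal |cdf μ t - cdf ν t| := by
  rw [lintegral_ofReal_abs_sub_eq_lintegral_measure_symmDiff]
  exact lintegral_congr (quantileCoupling_symmDiff μ ν)

end QuantileCoupling

end ProbabilityTheory

open ProbabilityTheory

theorem stmt14 (μ ν : Measure ℝ) [IsProbabilityMeasure μ] [IsProbabilityMeasure ν]
    (hμ : Integrable (fun x : ℝ => |x|) μ) (hν : Integrable (fun x : ℝ => |x|) ν) :
    sInf {c : ℝ | ∃ ρ : Measure (ℝ × ℝ), IsProbabilityMeasure ρ ∧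
        ρ.map Prod.fst = μ ∧ ρ.map Prod.snd = ν ∧
        c = ∫ p : ℝ × ℝ, |p.1 - p.2| ∂ρ}
    = ∫ x : ℝ, |(μ (Set.Iic x)).toReal - (ν (Set.Iic x)).toReal| := by
  simp_rw [← measureReal_def, ← cdf_eq_real]
  have cost_eq : ∀ ρ : Measure (ℝ × ℝ),
      ∫ p, |p.1 - p.2| ∂ρ = (∫⁻ p, ENNReal.ofReal |p.1 - p.2| ∂ρ).toReal := fun ρ =>
    integral_eq_lintegral_of_nonneg_ae (ae_of_all _ fun _ => abs_nonneg _) (by fun_prop)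
  rw [integral_eq_lintegral_of_nonneg_ae (f := fun x => |cdf μ x - cdf ν x|)
    (ae_of_all _ fun _ => abs_nonneg _)
    ((monotone_cdf μ).measurable.sub (monotone_cdf ν).measurable).abs.aestronglyMeasurable]
  refine IsLeast.csInf_eq ⟨⟨quantileCoupling μ ν, inferInstance, map_fst_quantileCoupling μ ν,
    map_snd_quantileCoupling μ ν, by rw [cost_eq, lintegral_quantileCoupling]⟩, ?_⟩
  rintro c ⟨ρ, hρ, h₁, h₂, rfl⟩
  rw [cost_eq]
  exact ENNReal.toReal_mono (integrable_abs_sub_of_map h₁ h₂ hμ hν).lintegral_lt_top.ne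
    (lintegral_ofReal_abs_cdf_sub_le h₁ h₂)
end
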